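/- arXiv:0705.1732 — 5 statements merged into one kernel-verified Lean document; each statement's English description precedes it below -/
import Mathlib

section
/- Let K = k((t^ℝ)) be the field of Hahn series with real exponents over a field k, and fix v ∈ ℝ^n. For a nonzero Laurent polynomial f = ∑_u a_u x^u over K in n variables, define the v-weight of a term as ν(a_u) - ⟨u, v⟩ and the initial form init_v(f) ∈ k[x_1^{±1},…,x_n^{±1}] as the sum over terms of minimal weight of (leading coefficient of a_u)·x^u. Then initial forms are multiplicative: init_v(fg) = init_v(f) · init_v(g) for nonzero f, g, provided k is an integral domain. -/
/-!
Substituting `xᵘ ↦ t^(-⟨u, v⟩) xᵘ` is a ring homomorphism from `K[x^±]` to the ring `k[x^±]((t^ℝ))`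
of Hahn series over the Laurent polynomial ring. The `t`-adic order of the image of `f` is the minimal
`v`-weight of its terms, and the coefficient in that degree is `init_v f`, so `init_v` becomes the
leading coefficient map. Leading coefficients of Hahn series are multiplicative over a domain, and
`k[x^±]` is a domain since `ℤⁿ` is torsion-free.
-/

/-- The `v`-weight of a term `a xᵘ` of a Laurent polynomial over `K = k((t^ℝ))`:
the valuation (order) of the Hahn series coefficient minus `⟨u, v⟩`. -/
noncomputable def tropWeight {k : Type*} [CommRing k] [IsDomain k] {n : ℕ}
    (v : Fin n → ℝ) (u : Fin n → ℤ) (a : HahnSeries ℝ k) : ℝ :=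
  a.order - ∑ i, (u i : ℝ) * v i

/-- The initial form `init_v(f)` of a Laurent polynomial `f` over `K = k((t^ℝ))`:
the sum, over the terms of minimal `v`-weight, of the leading coefficient of the
Hahn series coefficient times the corresponding monomial. -/
noncomputable def initForm {k : Type*} [CommRing k] [IsDomain k] {n : ℕ}
    (v : Fin n → ℝ) (f : AddMonoidAlgebra (HahnSeries ℝ k) (Fin n → ℤ)) :
    AddMonoidAlgebra k (Fin n → ℤ) :=
  ∑ u ∈ f.coeff.support,
    AddMonoidAlgebra.single u
      (if tropWeight v u (f.coeff u) = sInf ((fun u' => tropWeight v u' (f.coeff u')) '' f.coeff.support)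
        then (f.coeff u).leadingCoeff else 0)

namespace HahnSeries

variable {Γ R : Type*}

noncomputable def mapRingHom {S : Type*} [AddCommMonoid Γ] [PartialOrder Γ] [IsOrderedCancelAddMonoid Γ]
    [Semiring R] [Semiring S] (f : R →+* S) : HahnSeries Γ R →+* HahnSeries Γ S where
  toFun x := x.map f
  map_one' := HahnSeries.map_one f.toMonoidWithZeroHom
  map_mul' _ _ := HahnSeries.map_mul (f : R →ₙ+* S)
  map_zero' := HahnSeries.map_zero (f : ZeroHom R S)
  map_add' _ _ := HahnSeries.map_add (f : R →+ S)

theorem coeff_mapRingHom {S : Type*} [AddCommMonoid Γ] [PartialOrder Γ]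
    [IsOrderedCancelAddMonoid Γ] [Semiring R] [Semiring S] (f : R →+* S) (x : HahnSeries Γ R)
    (g : Γ) : (mapRingHom f x).coeff g = f (x.coeff g) := rfl

theorem leadingCoeff_eq_coeff_of_forall_lt [Zero Γ] [LinearOrder Γ] [Zero R] {x : HahnSeries Γ R}
    {w : Γ} (hw : x.coeff w ≠ 0) (h : ∀ j < w, x.coeff j = 0) : x.leadingCoeff = x.coeff w := by
  have hx : x ≠ 0 := ne_zero_of_coeff_ne_zero hw
  rw [leadingCoeff_eq, le_antisymm (order_le_of_coeff_ne_zero hw) ((le_order_iff_forall hx).2 h)]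

end HahnSeries

namespace AddMonoidAlgebra

variable {R M Γ : Type*} [CommSemiring R] [AddCommMonoid M]
  [AddCommGroup Γ] [PartialOrder Γ] [IsOrderedAddMonoid Γ]

noncomputable def twistMonomialHom (φ : M →+ Γ) : Multiplicative M →* HahnSeries Γ (AddMonoidAlgebra R M) where
  toFun u := HahnSeries.single (-φ u.toAdd) (single u.toAdd 1)
  map_one' := by
    rw [toAdd_one, map_zero, neg_zero, ← one_def, HahnSeries.single_zero_one]
  map_mul' u u' := by
    rw [HahnSeries.single_mul_single, single_mul_single, mul_one, toAdd_mul, map_add, neg_add]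

/-- The ring homomorphism `a xᵘ ↦ a t^(-φ u) xᵘ`. -/
noncomputable def twistToHahnSeries (φ : M →+ Γ) :
    AddMonoidAlgebra (HahnSeries Γ R) M →+* HahnSeries Γ (AddMonoidAlgebra R M) :=
  liftNCRingHom (HahnSeries.mapRingHom singleZeroRingHom) (twistMonomialHom φ)
    fun _ _ => Commute.all _ _

theorem coeff_twistToHahnSeries (φ : M →+ Γ) (f : AddMonoidAlgebra (HahnSeries Γ R) M) (w : Γ) :
    (twistToHahnSeries φ f).coeff w =
      ∑ u ∈ f.coeff.support, single u ((f.coeff u).coeff (w + φ u)) := by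
  conv_lhs => rw [← sum_coeff_single f, Finsupp.sum, map_sum, HahnSeries.coeff_sum]
  refine Finset.sum_congr rfl fun u _ => ?_
  rw [twistToHahnSeries, liftNCRingHom_single, twistMonomialHom, MonoidHom.coe_mk, OneHom.coe_mk,
    toAdd_ofAdd, HahnSeries.coeff_mul_single, sub_neg_eq_add, HahnSeries.coeff_mapRingHom]
  exact (single_mul_single _ _ _ _).trans (by rw [zero_add, mul_one])

theorem coeff_coeff_twistToHahnSeries (φ : M →+ Γ) (f : AddMonoidAlgebra (HahnSeries Γ R) M)
    (w : Γ) (u : M) : ((twistToHahnSeries φ f).coeff w).coeff u = (f.coeff u).coeff (w + φ u) := by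
  classical
  rw [coeff_twistToHahnSeries, coeff_sum, Finset.sum_apply']
  simp only [coeff_single, Finsupp.single_apply, Finset.sum_ite_eq', Finsupp.mem_support_iff]
  split_ifs with h
  · rfl
  · rw [not_not.1 h, HahnSeries.coeff_zero]

end AddMonoidAlgebra

open AddMonoidAlgebra

def pairingHom {ι : Type*} [Fintype ι] (v : ι → ℝ) : (ι → ℤ) →+ ℝ where
  toFun u := ∑ i, (u i : ℝ) * v i
  map_zero' := by simp
  map_add' u u' := by simp [add_mul, Finset.sum_add_distrib]

section InitialForm

variable {k : Type*} [CommRing k] [IsDomain k] {n : ℕ} {v : Fin n → ℝ}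
  {f : AddMonoidAlgebra (HahnSeries ℝ k) (Fin n → ℤ)}

theorem tropWeight_eq (v : Fin n → ℝ) (u : Fin n → ℤ) (a : HahnSeries ℝ k) :
    tropWeight v u a = a.order - pairingHom v u := rfl

noncomputable def minTropWeight (v : Fin n → ℝ) (f : AddMonoidAlgebra (HahnSeries ℝ k) (Fin n → ℤ)) :
    ℝ :=
  sInf ((fun u => tropWeight v u (f.coeff u)) '' f.coeff.support)

theorem minTropWeight_le {u : Fin n → ℤ} (hu : u ∈ f.coeff.support) :
    minTropWeight v f ≤ tropWeight v u (f.coeff u) :=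
  csInf_le (f.coeff.support.finite_toSet.image _).bddBelow ⟨u, hu, rfl⟩

theorem exists_tropWeight_eq_minTropWeight (hf : f ≠ 0) :
    ∃ u ∈ f.coeff.support, tropWeight v u (f.coeff u) = minTropWeight v f := by
  have hne : (f.coeff.support : Set (Fin n → ℤ)).Nonempty := by simpa using hf
  exact (hne.image _).csInf_mem (f.coeff.support.finite_toSet.image _)

theorem coeff_twistToHahnSeries_minTropWeight :
    (twistToHahnSeries (pairingHom v) f).coeff (minTropWeight v f) = initForm v f := by
  rw [coeff_twistToHahnSeries, initForm]
  refine Finset.sum_congr rfl fun u hu => congrArg _ ?_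
  rw [← minTropWeight]
  split_ifs with h
  · rw [HahnSeries.leadingCoeff_eq, ← h, tropWeight_eq, sub_add_cancel]
  · have hlt := lt_of_le_of_ne (minTropWeight_le hu) (Ne.symm h)
    rw [tropWeight_eq] at hlt
    exact HahnSeries.coeff_eq_zero_of_lt_order (by linarith)

theorem coeff_twistToHahnSeries_of_lt_minTropWeight {w : ℝ} (hw : w < minTropWeight v f) :
    (twistToHahnSeries (pairingHom v) f).coeff w = 0 := by
  rw [coeff_twistToHahnSeries]
  refine Finset.sum_eq_zero fun u hu => ?_
  have hlt := hw.trans_le (minTropWeight_le hu)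
  rw [tropWeight_eq] at hlt
  rw [HahnSeries.coeff_eq_zero_of_lt_order (by linarith), single_zero]

theorem coeff_twistToHahnSeries_minTropWeight_ne_zero (hf : f ≠ 0) :
    (twistToHahnSeries (pairingHom v) f).coeff (minTropWeight v f) ≠ 0 := by
  obtain ⟨u, hu, hmin⟩ := exists_tropWeight_eq_minTropWeight (v := v) hf
  refine ne_of_apply_ne (fun x => x.coeff u) ?_
  rw [coeff_coeff_twistToHahnSeries, ← hmin, tropWeight_eq, sub_add_cancel, coeff_zero,
    Finsupp.zero_apply, ← HahnSeries.leadingCoeff_eq]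
  exact HahnSeries.leadingCoeff_ne_zero.2 (Finsupp.mem_support_iff.1 hu)

theorem leadingCoeff_twistToHahnSeries (hf : f ≠ 0) :
    (twistToHahnSeries (pairingHom v) f).leadingCoeff = initForm v f := by
  rw [HahnSeries.leadingCoeff_eq_coeff_of_forall_lt
      (coeff_twistToHahnSeries_minTropWeight_ne_zero hf)
      fun _ => coeff_twistToHahnSeries_of_lt_minTropWeight,
    coeff_twistToHahnSeries_minTropWeight]

end InitialForm

/-- Initial forms of Laurent polynomials over `K = k((t^ℝ))` are multiplicative:
`init_v (f * g) = init_v f * init_v g` for nonzero `f, g`, when `k` is a domain. -/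
theorem initForm_mul {k : Type*} [CommRing k] [IsDomain k] {n : ℕ} (v : Fin n → ℝ)
    (f g : AddMonoidAlgebra (HahnSeries ℝ k) (Fin n → ℤ)) (hf : f ≠ 0) (hg : g ≠ 0) :
    initForm v (f * g) = initForm v f * initForm v g := by
  rw [← leadingCoeff_twistToHahnSeries hf, ← leadingCoeff_twistToHahnSeries hg,
    ← leadingCoeff_twistToHahnSeries (mul_ne_zero hf hg), map_mul, HahnSeries.leadingCoeff_mul]
end

section
/- Let M ≅ ℤ^n be a free abelian group of finite rank n ≥ 1, and let M_1, …, M_r ⊂ M be finitely many subgroups such that each M_i is a proper sublattice (i.e., M_i ≠ M) and M/M_i is infinite for each i. Then the complement M \ (M_1 ∪ ⋯ ∪ M_r) contains a coset λ + Λ of a finite-index subgroup Λ ⊂ M. -/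
/-- An infinite-index subgroup of `ℤⁿ` is annihilated by some nonzero linear functional. -/
lemma exists_functional_of_infinite_index (n : ℕ) (H : AddSubgroup (Fin n → ℤ))
    (h : Infinite ((Fin n → ℤ) ⧸ H)) :
    ∃ φ : (Fin n → ℤ) →ₗ[ℤ] ℤ, φ ≠ 0 ∧ ∀ v ∈ H, φ v = 0 := by
  obtain ⟨m, snf⟩ := (AddSubgroup.toIntSubmodule H).smithNormalForm (Pi.basisFun ℤ (Fin n))
  have hidx : H.index = 0 := AddSubgroup.index_eq_zero_iff_infinite.mpr h
  have hAdd : (AddSubgroup.toIntSubmodule H).toAddSubgroup = H := by ext x; simp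
  have hmn : m ≠ n := by
    intro he
    have h2 : (AddSubgroup.toIntSubmodule H).toAddSubgroup.index ≠ 0 :=
      snf.toAddSubgroup_index_ne_zero_iff.mpr (by simp [he])
    rw [hAdd, hidx] at h2
    exact h2 rfl
  obtain ⟨j, hj⟩ : ∃ j : Fin n, j ∉ Set.range snf.f := by
    by_contra hcon
    push_neg at hcon
    have hsurj : Function.Surjective snf.f := fun j => hcon j
    have hcard := Fintype.card_of_bijective ⟨snf.f.injective, hsurj⟩
    simp only [Fintype.card_fin] at hcard
    exact hmn hcard
  refine ⟨snf.bM.coord j, ?_, fun v hv => snf.le_ker_coord_of_notMem_range hj ?_⟩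
  · intro h0
    have h1 : snf.bM.coord j (snf.bM j) = 1 := by simp
    rw [h0] at h1
    simp at h1
  · exact hv

/-- If `M₁, …, M_r` are subgroups of `ℤⁿ` each of infinite index, then the complement
`M ∖ (M₁ ∪ ⋯ ∪ M_r)` contains a coset `λ + Λ` of a finite-index subgroup `Λ`. -/
theorem complement_of_sublattices_contains_coset (n r : ℕ)
    (M : Fin r → AddSubgroup (Fin n → ℤ))
    (hM : ∀ i, Infinite ((Fin n → ℤ) ⧸ M i)) :
    ∃ (lam : Fin n → ℤ) (Λ : AddSubgroup (Fin n → ℤ)), Λ.index ≠ 0 ∧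
      ∀ x ∈ Λ, ∀ i, lam + x ∉ M i := by
  classical
  choose φ hφne hφker using fun i => exists_functional_of_infinite_index n (M i) (hM i)
  -- coefficients of the functionals in the standard basis
  set c : Fin r → Fin n → ℤ := fun i k => φ i (fun j => if k = j then 1 else 0) with hc
  -- the polynomials ∑ c i k * X^k
  set p : Fin r → Polynomial ℤ :=
    fun i => ∑ k : Fin n, Polynomial.C (c i k) * Polynomial.X ^ (k : ℕ) with hp
  have hpc : ∀ i (k0 : Fin n), (p i).coeff (k0 : ℕ) = c i k0 := by
    intro i k0
    rw [hp]
    rw [Polynomial.finset_sum_coeff]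
    rw [Finset.sum_eq_single k0]
    · simp
    · intro k _ hk
      have : (k : ℕ) ≠ (k0 : ℕ) := fun hkk => hk (Fin.val_injective hkk)
      simp only [Polynomial.coeff_C_mul, Polynomial.coeff_X_pow, if_neg (Ne.symm this), mul_zero]
    · simp
  have hpne : ∀ i, p i ≠ 0 := by
    intro i hpi
    apply hφne i
    have hck : ∀ k, c i k = 0 := by
      intro k
      have := hpc i k
      rw [hpi] at this
      simpa using this.symm
    refine LinearMap.ext fun v => ?_
    rw [LinearMap.pi_apply_eq_sum_univ (φ i) v]
    simp only [LinearMap.zero_apply]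
    rw [Finset.sum_eq_zero]
    intro k _
    rw [show φ i (fun j => if k = j then 1 else 0) = c i k from rfl, hck k, smul_zero]
  -- find t making all polynomials nonvanishing
  have hq : (∏ i : Fin r, p i) ≠ 0 := Finset.prod_ne_zero_iff.mpr fun i _ => hpne i
  obtain ⟨t, ht⟩ := (∏ i : Fin r, p i).exists_eval_ne_zero_of_natDegree_lt_card hq
    (by rw [Cardinal.mk_int]; exact Cardinal.nat_lt_aleph0 _)
  set lam : Fin n → ℤ := fun k => t ^ (k : ℕ) with hlamdef
  have heval : ∀ i, (p i).eval t ≠ 0 := by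
    intro i hi
    apply ht
    rw [Polynomial.eval_prod]
    exact Finset.prod_eq_zero (Finset.mem_univ i) hi
  have hφlam : ∀ i, φ i lam = (p i).eval t := by
    intro i
    rw [LinearMap.pi_apply_eq_sum_univ (φ i) lam, hp, Polynomial.eval_finset_sum]
    refine Finset.sum_congr rfl fun k _ => ?_
    simp only [Polynomial.eval_mul, Polynomial.eval_C, Polynomial.eval_pow, Polynomial.eval_X]
    rw [hlamdef]
    simp only [smul_eq_mul]
    rw [mul_comm]
  have hlamne : ∀ i, φ i lam ≠ 0 := fun i => (hφlam i) ▸ heval i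
  -- the sublattice
  set N0 : ℕ := 1 + ∑ i : Fin r, (φ i lam).natAbs with hN0
  have hN0big : ∀ i, (φ i lam).natAbs < N0 := by
    intro i
    rw [hN0]
    have : (φ i lam).natAbs ≤ ∑ j : Fin r, (φ j lam).natAbs :=
      Finset.single_le_sum (f := fun j => (φ j lam).natAbs) (fun j _ => Nat.zero_le _)
        (Finset.mem_univ i)
    omega
  refine ⟨lam, AddSubgroup.pi Set.univ (fun _ => AddSubgroup.zmultiples (N0 : ℤ)), ?_, ?_⟩
  · rw [AddSubgroup.index_pi]
    simp only [Int.index_zmultiples, Int.natAbs_natCast]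
    refine Finset.prod_ne_zero_iff.mpr fun k _ => ?_
    omega
  · intro x hx i hmem
    have hx' : ∀ k, x k ∈ AddSubgroup.zmultiples (N0 : ℤ) := by
      intro k
      exact hx k (Set.mem_univ k)
    choose mfun hmfun using fun k => AddSubgroup.mem_zmultiples_iff.mp (hx' k)
    have hxeq : x = (N0 : ℤ) • mfun := by
      ext k
      rw [← hmfun k]
      simp [mul_comm]
    have h0 : φ i (lam + x) = 0 := hφker i _ hmem
    rw [map_add, hxeq, map_smul, smul_eq_mul] at h0
    have hdvd : (N0 : ℤ) ∣ φ i lam := by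
      refine ⟨-(φ i (mfun)), by linarith⟩
    have := Int.natAbs_dvd_natAbs.mpr hdvd
    have hle := Nat.le_of_dvd (Int.natAbs_pos.mpr (hlamne i)) this
    simp only [Int.natAbs_natCast] at hle
    exact absurd (hN0big i) (by omega)
end

section
/- Let K be an algebraically closed field with a nonarchimedean valuation ν, valuation ring R, maximal ideal 𝔪, and residue field k. Let g ∈ R[y] be a polynomial whose reduction ḡ ∈ k[y] modulo 𝔪 is nonzero, and let a ∈ k* be a root of ḡ. Then there exists x ∈ R* with residue a such that g(x) = 0. -/
/-!
Over the algebraically closed field `K`, every root `r` of `g` gives a linear factor. Writing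
`r = v / u` with `u, v ∈ A` not both in `𝔪`, the factor `u X - v` is primitive, so by Gauss's
lemma for the Bézout domain `A` it divides `g` already in `A[X]`. Reducing `g = (u X - v) q`
modulo `𝔪`, either `ū a = v̄`, which forces `u` to be a unit and makes `v / u` the required
root, or `a` is a root of `q̄`, and we descend to `q`, which has smaller degree.
-/

open Polynomial IsLocalRing

theorem Polynomial.isPrimitive_C_mul_X_sub_C {R : Type*} [CommRing R] {u v : R}
    (h : IsUnit u ∨ IsUnit v) : (C u * X - C v).IsPrimitive := by
  refine isPrimitive_iff_isUnit_of_C_dvd.mpr fun c hc => ?_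
  have hcu : c ∣ u := by simpa using (C_dvd_iff_dvd_coeff c _).mp hc 1
  have hcv : c ∣ v := by simpa using (C_dvd_iff_dvd_coeff c _).mp hc 0
  exact h.elim (isUnit_of_dvd_unit hcu) (isUnit_of_dvd_unit hcv)

theorem IsLocalRing.isUnit_of_residue_mul_eq {R : Type*} [CommRing R] [IsLocalRing R] {u v : R}
    (h : IsUnit u ∨ IsUnit v) {a : ResidueField R} (ha : residue R u * a = residue R v) :
    IsUnit u := by
  by_contra hu
  have hv : residue R v = 0 := by
    rw [← ha, (residue_eq_zero_iff u).mpr ((mem_maximalIdeal u).mpr hu), zero_mul]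
  exact (residue_ne_zero_iff_isUnit v).mpr (h.resolve_left hu) hv

namespace ValuationSubring

variable {K : Type*} [Field K] (A : ValuationSubring K)

theorem exists_eq_div_of_isUnit_or_isUnit (r : K) :
    ∃ u v : A, u ≠ 0 ∧ (IsUnit u ∨ IsUnit v) ∧ r = v / u := by
  by_cases hr : r ∈ A
  · exact ⟨1, ⟨r, hr⟩, one_ne_zero, .inl isUnit_one, by simp⟩
  · have hr0 : r ≠ 0 := fun h => hr (h ▸ A.zero_mem)
    refine ⟨⟨r⁻¹, (A.mem_or_inv_mem r).resolve_left hr⟩, 1, ?_, .inr isUnit_one, by simp⟩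
    exact fun h => hr0 (inv_eq_zero.mp (congrArg Subtype.val h))

theorem exists_linear_dvd_of_isRoot_map {g : A[X]} {r : K}
    (hr : (g.map (algebraMap A K)).IsRoot r) :
    ∃ u v : A, u ≠ 0 ∧ (IsUnit u ∨ IsUnit v) ∧ C u * X - C v ∣ g := by
  obtain ⟨u, v, hu, huv, rfl⟩ := A.exists_eq_div_of_isUnit_or_isUnit r
  refine ⟨u, v, hu, huv,
    (isPrimitive_C_mul_X_sub_C huv).dvd_of_fraction_map_dvd_fraction_map (K := K) ?_⟩
  have hu' : (u : K) ≠ 0 := fun h => hu (Subtype.ext h)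
  have hfactor : (C u * X - C v).map (algebraMap A K) = C (u : K) * (X - C ((v : K) / u)) := by
    simp [mul_sub, ← C_mul, mul_div_cancel₀ _ hu']
  rw [hfactor, (isUnit_C.mpr hu'.isUnit).mul_left_dvd]
  exact dvd_iff_isRoot.mpr hr

theorem exists_residue_eq_isRoot_of_isRoot_map_residue [IsAlgClosed K] (g : A[X])
    (hg : g.map (residue A) ≠ 0) (a : ResidueField A) (hroot : (g.map (residue A)).IsRoot a) :
    ∃ x : A, residue A x = a ∧ g.IsRoot x := by
  induction hn : g.natDegree using Nat.strong_induction_on generalizing g with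
  | _ n ih =>
    have hg0 : g ≠ 0 := by rintro rfl; simp at hg
    have hdeg : (g.map (algebraMap A K)).degree ≠ 0 := by
      rw [degree_map_eq_of_injective (FaithfulSMul.algebraMap_injective A K)]
      exact ((degree_pos_of_root hg hroot).trans_le degree_map_le).ne'
    obtain ⟨r, hr⟩ := IsAlgClosed.exists_root _ hdeg
    obtain ⟨u, v, hu, huv, q, rfl⟩ := A.exists_linear_dvd_of_isRoot_map hr
    rw [IsRoot, Polynomial.map_mul, eval_mul, mul_eq_zero] at hroot
    rcases hroot with hlin | hq
    · have hua : residue A u * a = residue A v := by simpa [sub_eq_zero] using hlin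
      have hunit := isUnit_of_residue_mul_eq huv hua
      refine ⟨hunit.unit⁻¹ * v, ?_, by simp [IsRoot, ← mul_assoc]⟩
      apply (hunit.map (residue A)).mul_left_cancel
      rw [← map_mul, ← mul_assoc, hunit.mul_val_inv, one_mul, hua]
    · have hq0 : q.map (residue A) ≠ 0 := fun h => hg (by rw [Polynomial.map_mul, h, mul_zero])
      have hlt : q.natDegree < n := by
        have hlin0 : C u * X - C v ≠ 0 := (isPrimitive_C_mul_X_sub_C huv).ne_zero
        rw [← hn, natDegree_mul hlin0 (right_ne_zero_of_mul hg0), natDegree_sub_C,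
          natDegree_C_mul_X u hu]
        omega
      obtain ⟨x, hxa, hx⟩ := ih _ hlt q hq0 hq rfl
      exact ⟨x, hxa, by simp [IsRoot, hx.eq_zero]⟩

end ValuationSubring

/-- Over an algebraically closed valued field, any nonzero root of the reduction of a
polynomial with coefficients in the valuation ring lifts to a root in the units of the
valuation ring with the prescribed residue. -/
theorem lift_root_of_reduction {K : Type*} [Field K] [IsAlgClosed K]
    (A : ValuationSubring K) (g : Polynomial A)
    (hg : Polynomial.map (IsLocalRing.residue A) g ≠ 0)
    (a : IsLocalRing.ResidueField A) (ha : a ≠ 0)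
    (hroot : (Polynomial.map (IsLocalRing.residue A) g).eval a = 0) :
    ∃ x : Aˣ, IsLocalRing.residue A (x : A) = a ∧ Polynomial.eval ((x : A)) g = 0 := by
  obtain ⟨x, hxa, hx⟩ := A.exists_residue_eq_isRoot_of_isRoot_map_residue g hg a hroot
  have hxunit : IsUnit x := (residue_ne_zero_iff_isUnit x).mp (hxa ▸ ha)
  exact ⟨hxunit.unit, hxa, hx⟩
end

section
/- Let K be an algebraically closed field with a nonarchimedean valuation, with valuation ring R, residue field k (algebraically closed), and let n ≥ 2. Let f ∈ R[y_1, …, y_n] be a polynomial whose reduction f̄ ∈ k[y_1,…,y_n] modulo the maximal ideal is nonzero, and suppose (ā_1, …, ā_n) ∈ (k*)^n is a zero of f̄. If the residue field k is infinite (e.g., algebraically closed), then there are infinitely many points x ∈ (R*)^n with f(x) = 0 and coordinatewise residue (ā_1, …, ā_n). -/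
open Polynomial in
/-- Commutation of coefficientwise ring hom with multivariate `aeval` into polynomials. -/
lemma map_aeval_poly {R S : Type*} [CommRing R] [CommRing S] (π : R →+* S) {n : ℕ}
    (s : Fin n → Polynomial R) (p : MvPolynomial (Fin n) R) :
    Polynomial.map π (MvPolynomial.aeval s p) =
      MvPolynomial.aeval (fun i => Polynomial.map π (s i)) (MvPolynomial.map π p) := by
  induction p using MvPolynomial.induction_on with
  | C a => simp [MvPolynomial.algebraMap_eq]
  | add p q hp hq => simp [hp, hq]
  | mul_X p i hp => simp [hp]

open Polynomial in
lemma eval_aeval_poly {R : Type*} [CommRing R] {n : ℕ}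
    (s : Fin n → Polynomial R) (x : R) (p : MvPolynomial (Fin n) R) :
    Polynomial.eval x (MvPolynomial.aeval s p) =
      MvPolynomial.eval (fun i => Polynomial.eval x (s i)) p := by
  induction p using MvPolynomial.induction_on with
  | C a => simp [MvPolynomial.algebraMap_eq]
  | add p q hp hq => simp [hp, hq]
  | mul_X p i hp => simp [hp]

lemma digits_inj {N n : ℕ} : ∀ (u v : Fin n → ℕ), (∀ i, u i < N) → (∀ i, v i < N) →
    (∑ i : Fin n, N ^ (i : ℕ) * u i) = (∑ i : Fin n, N ^ (i : ℕ) * v i) → u = v := by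
  induction n with
  | zero => intro u v _ _ _; funext i; exact absurd i.2 (by omega)
  | succ n ih =>
    intro u v hu hv h
    have hN : 0 < N := lt_of_le_of_lt (Nat.zero_le _) (hu 0)
    rw [Fin.sum_univ_succ, Fin.sum_univ_succ] at h
    have hru : ∀ (w : Fin (n+1) → ℕ),
        (∑ i : Fin n, N ^ ((i.succ : Fin (n+1)) : ℕ) * w i.succ)
          = N * ∑ i : Fin n, N ^ (i : ℕ) * w i.succ := by
      intro w
      rw [Finset.mul_sum]
      refine Finset.sum_congr rfl fun i _ => ?_
      rw [Fin.val_succ, pow_succ]; ring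
    rw [hru u, hru v] at h
    simp only [pow_zero, one_mul, Fin.val_zero] at h
    have h0 : u 0 = v 0 := by
      have := congrArg (· % N) h
      simpa [Nat.add_mul_mod_self_left, Nat.mod_eq_of_lt (hu 0), Nat.mod_eq_of_lt (hv 0)]
        using this
    have h1 : (∑ i : Fin n, N ^ (i : ℕ) * u i.succ) = ∑ i : Fin n, N ^ (i : ℕ) * v i.succ := by
      rw [h0] at h
      exact Nat.eq_of_mul_eq_mul_left hN (by omega)
    have := ih (fun i => u i.succ) (fun i => v i.succ) (fun i => hu i.succ) (fun i => hv i.succ) h1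
    funext i
    refine Fin.cases ?_ ?_ i
    · exact h0
    · intro j; exact congrFun this j

open Polynomial in
/-- Substituting `X i ↦ C (β i) * X ^ (c i)` into a nonzero multivariate polynomial,
with nonzero `β i` and weights `c` separating the support, gives a nonzero polynomial. -/
lemma aeval_units_ne_zero {k : Type*} [Field k] {n : ℕ}
    (p : MvPolynomial (Fin n) k) (hp : p ≠ 0) (β : Fin n → k) (hβ : ∀ i, β i ≠ 0)
    (c : Fin n → ℕ)
    (hc : ∀ u ∈ p.support, ∀ v ∈ p.support,
      (∑ i, c i * u i) = (∑ i, c i * v i) → u = v) :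
    MvPolynomial.aeval (fun i => Polynomial.C (β i) * Polynomial.X ^ (c i)) p ≠ 0 := by
  classical
  obtain ⟨u₀, hu₀⟩ := (MvPolynomial.support_nonempty.mpr hp)
  set s : Fin n → Polynomial k := fun i => Polynomial.C (β i) * Polynomial.X ^ (c i) with hs
  have key : ∀ u : Fin n →₀ ℕ, MvPolynomial.aeval s (MvPolynomial.monomial u (p.coeff u))
      = Polynomial.C (p.coeff u * ∏ i, β i ^ u i) * Polynomial.X ^ (∑ i, c i * u i) := by
    intro u
    rw [MvPolynomial.aeval_monomial]
    rw [Finsupp.prod_fintype _ _ (fun i => pow_zero (s i))]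
    have : ∀ i, s i ^ u i = Polynomial.C (β i ^ u i) * Polynomial.X ^ (c i * u i) := by
      intro i
      rw [hs, mul_pow, ← Polynomial.C_pow, ← pow_mul]
    simp_rw [this]
    rw [Finset.prod_mul_distrib, Finset.prod_pow_eq_pow_sum, ]
    simp [Polynomial.algebraMap_eq, ← map_prod (Polynomial.C (R:=k)) (fun i => β i ^ u i) Finset.univ, Polynomial.C_mul, mul_assoc]
  have hexp : (MvPolynomial.aeval s p) =
      ∑ u ∈ p.support, Polynomial.C (p.coeff u * ∏ i, β i ^ u i)
        * Polynomial.X ^ (∑ i, c i * u i) := by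
    conv_lhs => rw [← MvPolynomial.support_sum_monomial_coeff p]
    rw [map_sum]
    exact Finset.sum_congr rfl fun u _ => key u
  intro hzero
  have hco := congrArg (fun q => Polynomial.coeff q (∑ i, c i * u₀ i)) hzero
  rw [hexp] at hco
  simp only [Polynomial.finset_sum_coeff, Polynomial.coeff_C_mul, Polynomial.coeff_X_pow,
    Polynomial.coeff_zero] at hco
  rw [Finset.sum_eq_single u₀] at hco
  · rw [if_pos rfl, mul_one] at hco
    exact (mul_ne_zero (MvPolynomial.mem_support_iff.mp hu₀)
      (Finset.prod_ne_zero_iff.mpr fun i _ => pow_ne_zero _ (hβ i))) hco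
  · intro u hu hne
    rw [if_neg (fun hEq => hne (hc u hu u₀ hu₀ hEq.symm)), mul_zero]
  · intro h; exact absurd hu₀ h

/-- Coefficients of a polynomial over `K` all of whose roots are nonzero with inverse in `A`
are multiples (within `A`) of the constant coefficient. -/
lemma coeffs_factor {K : Type*} [Field K] [IsAlgClosed K] (A : ValuationSubring K) :
    ∀ (d : ℕ) (h : Polynomial K), h.natDegree = d → h ≠ 0 →
    (∀ r ∈ h.roots, r ≠ 0 ∧ r⁻¹ ∈ A) → ∀ j, ∃ a ∈ A, h.coeff j = h.coeff 0 * a := by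
  intro d
  induction d using Nat.strong_induction_on with
  | _ d ih =>
    intro h hdeg hne hroots j
    rcases Nat.eq_zero_or_pos d with hd0 | hdpos
    · rcases Nat.eq_zero_or_pos j with hj0 | hjpos
      · exact ⟨1, one_mem A, by rw [hj0, mul_one]⟩
      · refine ⟨0, zero_mem A, ?_⟩
        rw [Polynomial.coeff_eq_zero_of_natDegree_lt (by omega), mul_zero]
    · have hdeg' : h.degree ≠ 0 := by
        rw [Polynomial.degree_eq_natDegree hne, hdeg]
        exact_mod_cast (by omega : d ≠ 0)
      obtain ⟨r, hr⟩ := IsAlgClosed.exists_root h hdeg'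
      obtain ⟨h₂, hh₂⟩ := Polynomial.dvd_iff_isRoot.mpr hr
      have h₂ne : h₂ ≠ 0 := by
        intro h0; rw [h0, mul_zero] at hh₂; exact hne hh₂
      have hdeg₂ : h₂.natDegree = d - 1 := by
        have hmul : h.natDegree = 1 + h₂.natDegree := by
          rw [hh₂, Polynomial.natDegree_mul (Polynomial.X_sub_C_ne_zero r) h₂ne,
            Polynomial.natDegree_X_sub_C]
        omega
      have hrmem : r ∈ h.roots := (Polynomial.mem_roots hne).mpr hr
      obtain ⟨hr0, hrinv⟩ := hroots r hrmem
      have hroots₂ : ∀ ρ ∈ h₂.roots, ρ ≠ 0 ∧ ρ⁻¹ ∈ A := by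
        intro ρ hρ
        refine hroots ρ ?_
        rw [hh₂, Polynomial.roots_mul (hh₂ ▸ hne)]
        exact Multiset.mem_add.mpr (Or.inr hρ)
      have IH := ih (d - 1) (by omega) h₂ hdeg₂ h₂ne hroots₂
      have e0 : h.coeff 0 = (-r) * h₂.coeff 0 := by
        rw [hh₂, Polynomial.mul_coeff_zero]
        simp
      rcases Nat.eq_zero_or_pos j with hj0 | hjpos
      · exact ⟨1, one_mem A, by rw [hj0, mul_one]⟩
      · obtain ⟨m, rfl⟩ : ∃ m, j = m + 1 := ⟨j - 1, by omega⟩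
        have e1 : h.coeff (m + 1) = h₂.coeff m - r * h₂.coeff (m + 1) := by
          rw [hh₂, sub_mul, Polynomial.coeff_sub, Polynomial.coeff_X_mul,
            Polynomial.coeff_C_mul]
        obtain ⟨a₁, ha₁, hA1⟩ := IH m
        obtain ⟨a₂, ha₂, hA2⟩ := IH (m + 1)
        refine ⟨a₂ - r⁻¹ * a₁, sub_mem ha₂ (mul_mem hrinv ha₁), ?_⟩
        rw [e1, e0, hA1, hA2]
        field_simp
        ring

open Polynomial in
/-- A polynomial over a valuation ring with some unit coefficient and non-unit constant
coefficient has a non-unit root. -/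
lemma exists_root_nonunit {K : Type*} [Field K] [IsAlgClosed K] (A : ValuationSubring K)
    (g : Polynomial A) (hj : ∃ j, IsUnit (g.coeff j)) (h0 : ¬ IsUnit (g.coeff 0)) :
    ∃ m : A, ¬ IsUnit m ∧ Polynomial.eval m g = 0 := by
  have hinj : Function.Injective (algebraMap A K) := Subtype.coe_injective
  by_cases hc0 : g.coeff 0 = 0
  · exact ⟨0, hc0 ▸ h0, by rw [← Polynomial.coeff_zero_eq_eval_zero]; exact hc0⟩
  set gK := g.map (algebraMap A K) with hgKdef
  have hcoeff : ∀ i, gK.coeff i = algebraMap A K (g.coeff i) := fun i => Polynomial.coeff_map _ i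
  have hgK : gK ≠ 0 := by
    intro hq
    apply hc0
    apply hinj
    rw [← hcoeff 0, hq, Polynomial.coeff_zero, map_zero]
  by_contra hno
  push_neg at hno
  have hclaim : ∀ r ∈ gK.roots, r ≠ 0 ∧ r⁻¹ ∈ A := by
    intro r hrr
    have hre : Polynomial.eval r gK = 0 := (Polynomial.mem_roots hgK).mp hrr
    have hr0 : r ≠ 0 := by
      intro h
      apply hc0
      apply hinj
      rw [← hcoeff 0, Polynomial.coeff_zero_eq_eval_zero, ← h, hre, map_zero]
    refine ⟨hr0, ?_⟩
    rcases A.mem_or_inv_mem r with hmem | hmem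
    · set m : A := ⟨r, hmem⟩ with hm
      have hev : Polynomial.eval m g = 0 := by
        apply hinj
        rw [map_zero, ← Polynomial.eval₂_at_apply, ← Polynomial.eval_map]
        exact hre
      have hum : IsUnit m := by
        by_contra hcon
        exact hno m hcon hev
      obtain ⟨u, hu⟩ := hum
      have h1 : r * (((u⁻¹ : Aˣ) : A) : K) = 1 := by
        have := congrArg (fun z : A => (z : K)) u.mul_inv
        rw [hu] at this
        simpa using this
      rw [inv_eq_of_mul_eq_one_right h1]
      exact (((u⁻¹ : Aˣ) : A)).2
    · exact hmem
  obtain ⟨j, hj⟩ := hj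
  obtain ⟨a, haA, heq⟩ := coeffs_factor A gK.natDegree gK rfl hgK hclaim j
  rw [hcoeff j, hcoeff 0] at heq
  have heq' : g.coeff j = g.coeff 0 * ⟨a, haA⟩ := by
    apply hinj
    rw [map_mul]
    exact heq
  exact h0 (isUnit_of_mul_isUnit_left (heq' ▸ hj))

open Polynomial IsLocalRing in
/-- A nonzero residue which is a root of the nonzero reduction of `g` lifts to a unit root. -/
lemma exists_unit_root {K : Type*} [Field K] [IsAlgClosed K] (A : ValuationSubring K)
    (g : Polynomial A) (hg : g.map (IsLocalRing.residue A) ≠ 0)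
    (ab : IsLocalRing.ResidueField A) (hab : ab ≠ 0)
    (hroot : (g.map (IsLocalRing.residue A)).eval ab = 0) :
    ∃ r : Aˣ, Polynomial.eval (r : A) g = 0 ∧ IsLocalRing.residue A (r : A) = ab := by
  have unit_iff : ∀ x : A, IsUnit x ↔ IsLocalRing.residue A x ≠ 0 :=
    fun x => (IsLocalRing.residue_ne_zero_iff_isUnit x).symm
  obtain ⟨aL, haL⟩ := IsLocalRing.residue_surjective (R := A) ab
  set h := g.comp (X + C aL) with hh
  have hmapc : h.map (IsLocalRing.residue A) =
      (g.map (IsLocalRing.residue A)).comp (X + C ab) := by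
    rw [hh, Polynomial.map_comp]
    simp [haL]
  have hmapne : h.map (IsLocalRing.residue A) ≠ 0 := by
    intro hq
    apply hg
    have : ((g.map (IsLocalRing.residue A)).comp (X + C ab)).comp (X - C ab)
        = g.map (IsLocalRing.residue A) := by
      rw [Polynomial.comp_assoc]
      simp
    rw [← this, ← hmapc, hq, Polynomial.zero_comp]
  have hc0 : ¬ IsUnit (h.coeff 0) := by
    rw [unit_iff, not_not, Polynomial.coeff_zero_eq_eval_zero, hh, Polynomial.eval_comp]
    simp only [Polynomial.eval_add, Polynomial.eval_X, Polynomial.eval_C, zero_add]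
    rw [← Polynomial.eval₂_at_apply, haL, ← Polynomial.eval_map]
    exact hroot
  have hj : ∃ j, IsUnit (h.coeff j) := by
    by_contra hall
    push_neg at hall
    apply hmapne
    ext j
    rw [Polynomial.coeff_map, Polynomial.coeff_zero]
    by_contra hne
    exact hall j ((unit_iff _).mpr hne)
  obtain ⟨m, hm, hmev⟩ := exists_root_nonunit A h hj hc0
  have hev : Polynomial.eval (m + aL) g = 0 := by
    rw [hh, Polynomial.eval_comp] at hmev
    simpa using hmev
  have hres : IsLocalRing.residue A (m + aL) = ab := by
    rw [map_add, haL,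
      (IsLocalRing.residue_eq_zero_iff m).mpr ((IsLocalRing.mem_maximalIdeal m).mpr hm), zero_add]
  have hunit : IsUnit (m + aL) := (unit_iff _).mpr (by rw [hres]; exact hab)
  exact ⟨hunit.unit, by rw [hunit.unit_spec]; exact hev, by rw [hunit.unit_spec]; exact hres⟩

open IsLocalRing in
lemma fiber_infinite {K : Type*} [Field K] [IsAlgClosed K] (A : ValuationSubring K)
    (hA : A ≠ ⊤) (b : IsLocalRing.ResidueField A) (hb : b ≠ 0) :
    {x : Aˣ | IsLocalRing.residue A (x : A) = b}.Infinite := by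
  -- A contains a nonzero nonunit `t`
  obtain ⟨z, hz⟩ : ∃ z : K, z ∉ A := by
    by_contra hc
    push_neg at hc
    exact hA (by ext x; simp only [ValuationSubring.mem_top, iff_true]; exact hc x)
  have hz0 : z ≠ 0 := fun h => hz (h ▸ zero_mem A)
  have hzi : z⁻¹ ∈ A := (A.mem_or_inv_mem z).resolve_left hz
  set t : A := ⟨z⁻¹, hzi⟩ with ht
  have ht0 : t ≠ 0 := by
    intro h
    apply hz0
    have : z⁻¹ = 0 := congrArg Subtype.val h
    simpa using congrArg (·⁻¹) this
  have htn : ¬ IsUnit t := by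
    intro hu
    obtain ⟨u, hu⟩ := hu
    apply hz
    have h1 : (z⁻¹ : K) * (((u⁻¹ : Aˣ) : A) : K) = 1 := by
      have := congrArg (fun w : A => (w : K)) u.mul_inv
      rw [hu] at this
      simpa using this
    have h2 : (((u⁻¹ : Aˣ) : A) : K) = z := by
      have h3 := inv_eq_of_mul_eq_one_right h1
      rw [inv_inv] at h3
      exact h3.symm
    exact h2 ▸ (((u⁻¹ : Aˣ) : A)).2
  -- K is infinite, hence so is A
  have hAinf : Infinite A := by
    by_contra hfin
    rw [not_infinite_iff_finite] at hfin
    have h1 : (Set.univ : Set K) ⊆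
        (fun a : A => (a : K)) '' Set.univ ∪ (fun a : A => (a : K)⁻¹) '' Set.univ := by
      intro x _
      rcases A.mem_or_inv_mem x with hm | hm
      · exact Or.inl ⟨⟨x, hm⟩, trivial, rfl⟩
      · exact Or.inr ⟨⟨x⁻¹, hm⟩, trivial, by simp⟩
    have h2 : (Set.univ : Set K).Finite :=
      Set.Finite.subset (Set.Finite.union (Set.toFinite _) (Set.toFinite _)) h1
    exact Set.infinite_univ h2
  -- a unit lift of `b`
  have hbu : IsUnit (Classical.choose (IsLocalRing.residue_surjective (R := A) b)) := by
    rw [← IsLocalRing.residue_ne_zero_iff_isUnit,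
      Classical.choose_spec (IsLocalRing.residue_surjective (R := A) b)]
    exact hb
  set x₀ := Classical.choose (IsLocalRing.residue_surjective (R := A) b) with hx₀
  have hx₀b : IsLocalRing.residue A x₀ = b :=
    Classical.choose_spec (IsLocalRing.residue_surjective (R := A) b)
  have htm : IsLocalRing.residue A t = 0 :=
    (IsLocalRing.residue_eq_zero_iff t).mpr ((IsLocalRing.mem_maximalIdeal t).mpr htn)
  have key : ∀ c : A, ∃ u : Aˣ, (u : A) = x₀ + t * c := by
    intro c
    have : IsUnit (x₀ + t * c) := by
      rw [← IsLocalRing.residue_ne_zero_iff_isUnit, map_add, map_mul, htm, zero_mul, add_zero,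
        hx₀b]
      exact hb
    exact ⟨this.unit, this.unit_spec⟩
  choose F hF using key
  refine Set.infinite_of_injective_forall_mem (f := F) ?_ ?_
  · intro c₁ c₂ hcc
    have : x₀ + t * c₁ = x₀ + t * c₂ := by
      rw [← hF c₁, ← hF c₂, hcc]
    have h3 : t * c₁ = t * c₂ := by
      have := add_left_cancel this
      exact this
    have : (t : K) * c₁ = (t : K) * c₂ := by exact_mod_cast congrArg Subtype.val h3
    have ht0' : (t : K) ≠ 0 := fun h => ht0 (Subtype.ext h)
    exact Subtype.ext (mul_left_cancel₀ ht0' this)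
  · intro c
    show IsLocalRing.residue A ((F c : A)) = b
    rw [hF c, map_add, map_mul, htm, zero_mul, add_zero, hx₀b]

/-- Over an algebraically closed field with a nontrivial nonarchimedean valuation, with
infinite residue field, a zero in `(k*)ⁿ` (`n ≥ 2`) of the nonzero reduction of a
polynomial over the valuation ring lifts to infinitely many zeros in `(R*)ⁿ` with the
prescribed coordinatewise residues. -/
theorem infinitely_many_lifts {K : Type*} [Field K] [IsAlgClosed K]
    (A : ValuationSubring K) (hA : A ≠ ⊤) (n : ℕ) (hn : 2 ≤ n)
    (f : MvPolynomial (Fin n) A)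
    (hf : MvPolynomial.map (IsLocalRing.residue A) f ≠ 0)
    [Infinite (IsLocalRing.ResidueField A)]
    (a : Fin n → (IsLocalRing.ResidueField A)ˣ)
    (ha : MvPolynomial.eval (fun i => ((a i : IsLocalRing.ResidueField A)))
        (MvPolynomial.map (IsLocalRing.residue A) f) = 0) :
    {x : Fin n → Aˣ | MvPolynomial.eval (fun i => (x i : A)) f = 0 ∧
      ∀ i, IsLocalRing.residue A ((x i : A)) = (a i : IsLocalRing.ResidueField A)}.Infinite := by
  classical
  set π := IsLocalRing.residue A with hπdef
  set fb := MvPolynomial.map π f with hfbdef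
  set N := fb.totalDegree + 1 with hNdef
  set c : Fin n → ℕ := fun i => N ^ (i : ℕ) with hcdef
  have hsupp : ∀ u ∈ fb.support, ∀ i, (u : Fin n →₀ ℕ) i < N := by
    intro u hu i
    have h1 : u i ≤ u.sum fun _ e => e := by
      by_cases h : u i = 0
      · omega
      · exact Finset.single_le_sum (f := fun j => u j) (fun _ _ => Nat.zero_le _)
          (Finsupp.mem_support_iff.mpr h)
    have h2 : (u.sum fun _ e => e) ≤ fb.totalDegree := MvPolynomial.le_totalDegree hu
    omega
  have h0n : 0 < n := by omega
  have h1n : 1 < n := by omega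
  set i0 : Fin n := ⟨0, h0n⟩ with hi0def
  set i1 : Fin n := ⟨1, h1n⟩ with hi1def
  have hi01 : i0 ≠ i1 := by
    rw [hi0def, hi1def]
    intro hq
    simpa using congrArg Fin.val hq
  have ha0 : ((a i0 : IsLocalRing.ResidueField A)) ≠ 0 := Units.ne_zero _
  set b : Fin n → IsLocalRing.ResidueField A :=
    fun i => (a i : IsLocalRing.ResidueField A) *
      ((a i0 : IsLocalRing.ResidueField A))⁻¹ ^ (c i) with hbdef
  have hbne : ∀ i, b i ≠ 0 :=
    fun i => mul_ne_zero (Units.ne_zero _) (pow_ne_zero _ (inv_ne_zero ha0))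
  have hb_tele : ∀ i, b i * (a i0 : IsLocalRing.ResidueField A) ^ (c i)
      = (a i : IsLocalRing.ResidueField A) := by
    intro i
    rw [hbdef, mul_assoc, inv_pow, inv_mul_cancel₀ (pow_ne_zero _ ha0), mul_one]
  have hχex : ∀ i, ∃ x : Aˣ, π (x : A) = b i := by
    intro i
    obtain ⟨w, hw⟩ := IsLocalRing.residue_surjective (R := A) (b i)
    have hwu : IsUnit w := (IsLocalRing.residue_ne_zero_iff_isUnit w).mp
      (by rw [hw]; exact hbne i)
    exact ⟨hwu.unit, by rw [hwu.unit_spec]; exact hw⟩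
  choose χ hχ using hχex
  have hfib := fiber_infinite A hA (b i1) (hbne i1)
  haveI hTinf : Infinite {x : Aˣ // π (x : A) = b i1} :=
    Set.infinite_coe_iff.mpr hfib
  set χt : {x : Aˣ // π (x : A) = b i1} → Fin n → Aˣ :=
    fun t => Function.update χ i1 t.1 with hχtdef
  have hres : ∀ t i, π ((χt t i : A)) = b i := by
    intro t i
    by_cases h : i = i1
    · subst h
      simp only [hχtdef, Function.update_self]
      exact t.2
    · simp only [hχtdef, Function.update_of_ne h]
      exact hχ i
  set s : {x : Aˣ // π (x : A) = b i1} → Fin n → Polynomial A :=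
    fun t i => Polynomial.C ((χt t i : A)) * Polynomial.X ^ (c i) with hsdef
  set g : {x : Aˣ // π (x : A) = b i1} → Polynomial A :=
    fun t => MvPolynomial.aeval (s t) f with hgdef
  have hmap : ∀ t, (g t).map π =
      MvPolynomial.aeval (fun i => Polynomial.C (b i) * Polynomial.X ^ (c i)) fb := by
    intro t
    have hsimp : (fun i => Polynomial.map π (s t i))
        = fun i => Polynomial.C (b i) * Polynomial.X ^ (c i) := by
      funext i
      simp only [hsdef]
      rw [Polynomial.map_mul, Polynomial.map_C, Polynomial.map_pow, Polynomial.map_X, hres t i]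
    rw [hgdef, map_aeval_poly, hsimp, ← hfbdef]
  have hmapne : ∀ t, (g t).map π ≠ 0 := by
    intro t
    rw [hmap t]
    apply aeval_units_ne_zero fb hf b hbne c
    intro u hu v hv hsum
    have hdig := digits_inj (N := N) (fun i => u i) (fun i => v i) (hsupp u hu) (hsupp v hv)
      (by simpa [hcdef] using hsum)
    exact DFunLike.ext u v fun i => congrFun hdig i
  have hrootb : ∀ t, ((g t).map π).eval ((a i0 : IsLocalRing.ResidueField A)) = 0 := by
    intro t
    rw [hmap t, eval_aeval_poly]
    have hpt : (fun i => Polynomial.eval ((a i0 : IsLocalRing.ResidueField A))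
        (Polynomial.C (b i) * Polynomial.X ^ (c i)))
        = fun i => (a i : IsLocalRing.ResidueField A) := by
      funext i
      rw [Polynomial.eval_mul, Polynomial.eval_C, Polynomial.eval_pow, Polynomial.eval_X]
      exact hb_tele i
    rw [hpt]
    exact ha
  have hroots : ∀ t, ∃ r : Aˣ, Polynomial.eval (r : A) (g t) = 0 ∧
      π ((r : A)) = (a i0 : IsLocalRing.ResidueField A) :=
    fun t => exists_unit_root A (g t) (hmapne t) _ ha0 (hrootb t)
  choose r hr1 hr2 using hroots
  set Φ : {x : Aˣ // π (x : A) = b i1} → (Fin n → Aˣ) :=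
    fun t i => χt t i * (r t) ^ (c i) with hΦdef
  refine Set.infinite_of_injective_forall_mem (f := Φ) ?_ ?_
  · intro t t' h
    have hc0 : c i0 = 1 := by rw [hcdef]; simp [hi0def]
    have h0 := congrFun h i0
    simp only [hΦdef, hχtdef, hc0, pow_one, Function.update_of_ne hi01] at h0
    have hrr : r t = r t' := mul_left_cancel h0
    have h1 := congrFun h i1
    simp only [hΦdef, hχtdef, Function.update_self] at h1
    rw [hrr] at h1
    exact Subtype.ext (mul_right_cancel h1)
  · intro t
    constructor
    · have hpteq : (fun i => ((Φ t i : A))) = fun i => Polynomial.eval ((r t : A)) (s t i) := by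
        funext i
        simp only [hΦdef, hsdef, Polynomial.eval_mul, Polynomial.eval_C, Polynomial.eval_pow,
          Polynomial.eval_X, Units.val_mul, Units.val_pow_eq_pow_val]
      rw [hpteq, ← eval_aeval_poly]
      exact hr1 t
    · intro i
      have hval : ((Φ t i : A)) = (χt t i : A) * ((r t : A)) ^ (c i) := by
        simp [hΦdef]
      have : π ((Φ t i : A)) = b i * (a i0 : IsLocalRing.ResidueField A) ^ (c i) := by
        rw [hval, map_mul, map_pow, hres t i, hr2 t]
      rw [this, hb_tele i]
end

section
/- Let K be a field with nonarchimedean valuation ν and let f = c(y - r_1)⋯(y - r_d) be a polynomial over K with all roots r_i ∈ K*. Then for each j, the valuation of the coefficient of y^{d-j} in f is at least ν(c) plus the sum of the j smallest values among ν(r_1), …, ν(r_d); and equality holds for the j at which the sorted valuation sequence strictly increases. -/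
/-!
The coefficient of `y ^ (d - j)` is `c` times `∑_{#t = j} ∏_{i ∈ t} (-r i)`, and the term indexed
by `t` has valuation `∑_{i ∈ t} ν (r i)`. Such a sum is at least the sum over the `j` roots of
smallest valuation, since trading the elements of `t` outside that set for the ones it misses can
only lower it; when the sorted valuations jump at `j`, that set is the unique minimiser, so one term
of the sum has strictly smaller valuation than all others and the ultrametric inequality becomes an
equality. Extending `ν` by `ν 0 = ⊤` turns it into an additive valuation with values in
`WithTop ℝ`, to which the ultrametric estimates for finite sums apply.
-/

open Finset Polynomial

namespace Finset

variable {ι M : Type*} [AddCommMonoid M] [LinearOrder M] {f : ι → M} {s t : Finset ι}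

theorem sum_le_sum_of_card_eq_of_forall_le [IsOrderedAddMonoid M] (hst : #s = #t)
    (h : ∀ x ∈ s, ∀ y ∈ t, f x ≤ f y) : ∑ x ∈ s, f x ≤ ∑ y ∈ t, f y := by
  rcases s.eq_empty_or_nonempty with rfl | hs
  · rw [card_empty, eq_comm, card_eq_zero] at hst
    simp [hst]
  calc ∑ x ∈ s, f x ≤ #s • s.sup' hs f := sum_le_card_nsmul _ _ _ fun x hx => le_sup' f hx
    _ = #t • s.sup' hs f := by rw [hst]
    _ ≤ ∑ y ∈ t, f y := card_nsmul_le_sum _ _ _ fun y hy => sup'_le hs f fun x hx => h x hx y hy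

theorem sum_lt_sum_of_card_eq_of_forall_lt [IsOrderedCancelAddMonoid M] (hst : #s = #t)
    (hs : s.Nonempty) (h : ∀ x ∈ s, ∀ y ∈ t, f x < f y) : ∑ x ∈ s, f x < ∑ y ∈ t, f y := by
  have ht : t.Nonempty := by rw [← card_pos, ← hst]; exact hs.card_pos
  calc ∑ x ∈ s, f x ≤ #s • s.sup' hs f := sum_le_card_nsmul _ _ _ fun x hx => le_sup' f hx
    _ = ∑ _y ∈ t, s.sup' hs f := by rw [sum_const, hst]
    _ < ∑ y ∈ t, f y :=
      sum_lt_sum_of_nonempty ht fun y hy => (sup'_lt_iff hs).2 fun x hx => h x hx y hy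

theorem sum_le_sum_of_card_eq_of_forall_le_notMem [IsOrderedAddMonoid M] (hst : #s = #t)
    (h : ∀ x ∈ s, ∀ y ∉ s, f x ≤ f y) : ∑ x ∈ s, f x ≤ ∑ y ∈ t, f y := by
  classical
  rw [← sum_inter_add_sum_sdiff s t, ← sum_inter_add_sum_sdiff t s, inter_comm]
  exact add_le_add le_rfl <| sum_le_sum_of_card_eq_of_forall_le (card_sdiff_comm hst)
    fun x hx y hy => h x (mem_sdiff.1 hx).1 y (mem_sdiff.1 hy).2

theorem sum_lt_sum_of_card_eq_of_forall_lt_notMem [IsOrderedCancelAddMonoid M] (hst : #s = #t)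
    (hts : t ≠ s) (h : ∀ x ∈ s, ∀ y ∉ s, f x < f y) : ∑ x ∈ s, f x < ∑ y ∈ t, f y := by
  classical
  have hs : (s \ t).Nonempty := by
    rw [nonempty_iff_ne_empty, Ne, sdiff_eq_empty_iff_subset]
    exact fun hsub => hts (eq_of_subset_of_card_le hsub hst.ge).symm
  rw [← sum_inter_add_sum_sdiff s t, ← sum_inter_add_sum_sdiff t s, inter_comm]
  exact add_lt_add_of_le_of_lt le_rfl <| sum_lt_sum_of_card_eq_of_forall_lt
    (card_sdiff_comm hst) hs fun x hx y hy => h x (mem_sdiff.1 hx).1 y (mem_sdiff.1 hy).2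

end Finset

theorem Polynomial.coeff_prod_X_sub_C {R ι : Type*} [CommRing R] [Fintype ι] (x : ι → R) {j : ℕ}
    (hj : j ≤ Fintype.card ι) :
    (∏ i, (X - C (x i))).coeff (Fintype.card ι - j) =
      ∑ t ∈ powersetCard j univ, ∏ i ∈ t, -x i := by
  simp_rw [sub_eq_add_neg, ← map_neg C]
  rw [prod_X_add_C_coeff univ _ (by simp), card_univ, Nat.sub_sub_self hj]

namespace AddValuation

section Domain

variable {R Γ : Type*} [Ring R] [IsDomain R] [AddCommGroup Γ] [LinearOrder Γ] [IsOrderedAddMonoid Γ]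

open Classical in
noncomputable def ofNeZero (ν : R → Γ)
    (hmul : ∀ a b : R, a ≠ 0 → b ≠ 0 → ν (a * b) = ν a + ν b)
    (hadd : ∀ a b : R, a ≠ 0 → b ≠ 0 → a + b ≠ 0 → min (ν a) (ν b) ≤ ν (a + b)) :
    AddValuation R (WithTop Γ) :=
  AddValuation.of (fun a => if a = 0 then ⊤ else (ν a : WithTop Γ)) (if_pos rfl)
    (by simpa using hmul 1 1 one_ne_zero one_ne_zero)
    (fun a b => by
      by_cases ha : a = 0
      · simp [ha]
      by_cases hb : b = 0
      · simp [hb]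
      by_cases hab : a + b = 0
      · simp [hab]
      simpa [ha, hb, hab] using hadd a b ha hb hab)
    (fun a b => by
      by_cases ha : a = 0
      · simp [ha]
      by_cases hb : b = 0
      · simp [hb]
      simp [ha, hb, hmul a b ha hb])

variable {ν : R → Γ} {hmul : ∀ a b : R, a ≠ 0 → b ≠ 0 → ν (a * b) = ν a + ν b}
  {hadd : ∀ a b : R, a ≠ 0 → b ≠ 0 → a + b ≠ 0 → min (ν a) (ν b) ≤ ν (a + b)}

theorem ofNeZero_apply {a : R} (ha : a ≠ 0) : ofNeZero ν hmul hadd a = ν a := by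
  simp [ofNeZero, ha]

theorem ofNeZero_eq_coe_iff {a : R} {g : Γ} : ofNeZero ν hmul hadd a = g ↔ a ≠ 0 ∧ ν a = g := by
  by_cases ha : a = 0 <;> simp [ofNeZero, ha]

end Domain

section CommRing

variable {R Γ₀ ι : Type*} [CommRing R] [LinearOrderedAddCommMonoidWithTop Γ₀]
  (v : AddValuation R Γ₀)

theorem map_prod (s : Finset ι) (f : ι → R) : v (∏ i ∈ s, f i) = ∑ i ∈ s, v (f i) := by
  classical
  induction s using Finset.induction_on with
  | empty => simp
  | insert a s ha ih => rw [prod_insert ha, sum_insert ha, v.map_mul, ih]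

theorem map_sum_eq_of_lt [DecidableEq ι] {s : Finset ι} {f : ι → R} {j : ι} (hj : j ∈ s)
    (hf : ∀ i ∈ s \ {j}, v (f j) < v (f i)) : v (∑ i ∈ s, f i) = v (f j) := by
  rcases eq_or_ne (v (f j)) ⊤ with htop | htop
  · have : s \ {j} = ∅ := eq_empty_of_forall_notMem fun i hi => by simpa [htop] using hf i hi
    rw [← sum_sdiff (singleton_subset_iff.2 hj), this, sum_empty, zero_add, sum_singleton]
  rw [sum_eq_add_sum_sdiff_singleton_of_mem hj]
  exact v.map_add_eq_of_lt_left (v.map_lt_sum htop hf)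

end CommRing

section Esymm

variable {R Γ ι : Type*} [CommRing R] [AddCommGroup Γ] [LinearOrder Γ] [IsOrderedAddMonoid Γ]
  (v : AddValuation R (WithTop Γ)) {x : ι → R} {w : ι → Γ}

theorem map_prod_eq_coe_sum (hw : ∀ i, v (x i) = w i) (t : Finset ι) :
    v (∏ i ∈ t, x i) = ↑(∑ i ∈ t, w i) := by
  simp only [map_prod, hw, WithTop.coe_sum]

variable [Fintype ι] {s : Finset ι}

theorem le_map_sum_powersetCard (hw : ∀ i, v (x i) = w i) (hs : ∀ a ∈ s, ∀ b ∉ s, w a ≤ w b) :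
    ↑(∑ i ∈ s, w i) ≤ v (∑ t ∈ powersetCard #s univ, ∏ i ∈ t, x i) :=
  map_le_sum v fun t ht => by
    rw [map_prod_eq_coe_sum v hw, WithTop.coe_le_coe]
    exact sum_le_sum_of_card_eq_of_forall_le_notMem (mem_powersetCard.1 ht).2.symm hs

theorem map_sum_powersetCard_eq (hw : ∀ i, v (x i) = w i) (hs : ∀ a ∈ s, ∀ b ∉ s, w a < w b) :
    v (∑ t ∈ powersetCard #s univ, ∏ i ∈ t, x i) = ↑(∑ i ∈ s, w i) := by
  classical
  rw [map_sum_eq_of_lt v (mem_powersetCard.2 ⟨subset_univ s, rfl⟩), map_prod_eq_coe_sum v hw]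
  intro t ht
  obtain ⟨htT, hts⟩ := mem_sdiff.1 ht
  rw [map_prod_eq_coe_sum v hw, map_prod_eq_coe_sum v hw, WithTop.coe_lt_coe]
  exact sum_lt_sum_of_card_eq_of_forall_lt_notMem (mem_powersetCard.1 htT).2.symm
    (by simpa using hts) hs

end Esymm

end AddValuation

/-- Newton polygon of a factored polynomial `f = c (y - r₁) ⋯ (y - r_d)`: the valuation of
the coefficient of `y^(d-j)` is at least `ν(c)` plus the sum of the `j` smallest root
valuations, with equality at the indices `j` where the sorted valuation sequence strictly
increases (i.e. where the minimizing subset of roots is unique). -/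
theorem newton_polygon_of_factorization {K : Type*} [Field K] (ν : K → ℝ)
    (hmul : ∀ a b : K, a ≠ 0 → b ≠ 0 → ν (a * b) = ν a + ν b)
    (hadd : ∀ a b : K, a ≠ 0 → b ≠ 0 → a + b ≠ 0 → min (ν a) (ν b) ≤ ν (a + b))
    (d : ℕ) (c : K) (hc : c ≠ 0) (r : Fin d → K) (hr : ∀ i, r i ≠ 0)
    (σ : Equiv.Perm (Fin d)) (hσ : Monotone fun i => ν (r (σ i))) :
    let P : Polynomial K := Polynomial.C c * ∏ i, (Polynomial.X - Polynomial.C (r i))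
    (∀ j : ℕ, j ≤ d → P.coeff (d - j) ≠ 0 →
      ν c + ∑ i ∈ Finset.univ.filter (fun i : Fin d => (i : ℕ) < j), ν (r (σ i)) ≤
        ν (P.coeff (d - j))) ∧
    (∀ j : ℕ, j ≤ d →
      (∀ i i' : Fin d, (i : ℕ) < j → j ≤ (i' : ℕ) → ν (r (σ i)) < ν (r (σ i'))) →
      P.coeff (d - j) ≠ 0 ∧
        ν (P.coeff (d - j)) =
          ν c + ∑ i ∈ Finset.univ.filter (fun i : Fin d => (i : ℕ) < j), ν (r (σ i))) := by
  intro P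
  set v := AddValuation.ofNeZero ν hmul hadd
  set F : ℕ → Finset (Fin d) := fun j => univ.filter fun i : Fin d => (i : ℕ) < j
  have hroot : ∀ i, v (-r (σ i)) = ν (r (σ i)) := fun i => by
    rw [AddValuation.map_neg, AddValuation.ofNeZero_apply (hr _)]
  have hF : ∀ j ≤ d, #(F j) = j := fun j hj => by simp [F, Fin.card_filter_val_lt, hj]
  have hcoeff : ∀ j ≤ d, v (P.coeff (d - j)) =
      ν c + v (∑ t ∈ powersetCard j univ, ∏ i ∈ t, -r (σ i)) := by
    intro j hj
    have hprod := coeff_prod_X_sub_C (fun i => r (σ i)) (j := j) (by simpa using hj)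
    rw [Fintype.card_fin] at hprod
    rw [coeff_C_mul, ← Equiv.prod_comp σ, hprod, AddValuation.map_mul,
      AddValuation.ofNeZero_apply hc]
  constructor
  · intro j hj hne
    have hle := AddValuation.le_map_sum_powersetCard v hroot (s := F j)
      fun a ha b hb => hσ (by simp only [F, mem_filter, mem_univ, true_and, not_lt] at ha hb; omega)
    rw [hF j hj] at hle
    have hv : v (P.coeff (d - j)) = ν (P.coeff (d - j)) := AddValuation.ofNeZero_apply hne
    rw [← WithTop.coe_le_coe, ← hv, hcoeff j hj, WithTop.coe_add]
    exact add_le_add le_rfl hle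
  · intro j hj hstrict
    have heq := AddValuation.map_sum_powersetCard_eq v hroot (s := F j)
      fun a ha b hb => hstrict a b (by simpa [F] using ha) (by simpa [F] using hb)
    rw [hF j hj] at heq
    exact AddValuation.ofNeZero_eq_coe_iff.1 (by rw [hcoeff j hj, heq, WithTop.coe_add])
end
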